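/- For every dimension n ∈ ℕ and every C > 0 there exists C_N > 0, depending only on n and C, such that for every finite triangulation 𝒯 (of the closure of a bounded open set in ℝⁿ) with shape constant at most C and every T ∈ 𝒯, the number of simplices S ∈ 𝒯 with S ∩ T ≠ ∅ is at most C_N. -/

import Mathlib

/-!
Every member `S` of the triangulation is a face of an `n`-simplex: the `n`-simplices alone
cover `cl Ω` (the other members are Lebesgue-null and `Ω` is open), so some `n`-simplex `P`
contains the centroid of `S`, and the face `S ∩ P` of `S` containing that centroid must be `S`.
An `n`-simplex has at most `2^(n+1)` faces, so it suffices to count the `n`-simplices meeting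
`T`. By shape regularity each has volume at least `h_T^n / C^(n+1)`; they overlap only in null
faces and all lie in the ball of radius `(C + 1) h_T` about a point of `T`, so there are at most
`C^(n+1) (C + 1)^n |B₁|` of them. If `h_T = 0`, the same ball shows that `T` is a point whose
only neighbour is `T` itself.
-/

open Set MeasureTheory Metric
open scoped ENNReal NNReal

noncomputable section

/-- Euclidean `n`-space. -/
abbrev Euc (n : ℕ) : Type := EuclideanSpace ℝ (Fin n)

/-- A closed affine simplex: the convex hull of an affinely independent tuple. -/
def IsSimplex {n : ℕ} (S : Set (Euc n)) : Prop :=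
  ∃ (k : ℕ) (v : Fin (k + 1) → Euc n),
    AffineIndependent ℝ v ∧ S = convexHull ℝ (Set.range v)

/-- `S` is a (sub)simplex (face) of the simplex `T`: `T` is the convex hull of an
affinely independent tuple and `S` is the convex hull of a nonempty subfamily of
the vertices. -/
def IsFaceOf {n : ℕ} (S T : Set (Euc n)) : Prop :=
  ∃ (k : ℕ) (v : Fin (k + 1) → Euc n), AffineIndependent ℝ v ∧
    T = convexHull ℝ (Set.range v) ∧
    ∃ s : Set (Fin (k + 1)), s.Nonempty ∧ S = convexHull ℝ (v '' s)

/-- A finite triangulation of the set `X`: a finite family of simplices covering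
`X`, closed under taking faces, such that any two members intersect in a common
face (or not at all). -/
def IsTriangulation {n : ℕ} (𝒯 : Finset (Set (Euc n))) (X : Set (Euc n)) : Prop :=
  (∀ S ∈ 𝒯, IsSimplex S) ∧
  (⋃ S ∈ 𝒯, S) = X ∧
  (∀ T ∈ 𝒯, ∀ S : Set (Euc n), IsFaceOf S T → S ∈ 𝒯) ∧
  (∀ S ∈ 𝒯, ∀ T ∈ 𝒯, S ∩ T = ∅ ∨ (IsFaceOf (S ∩ T) S ∧ IsFaceOf (S ∩ T) T))

/-- The dimension of a simplex (of any subset of `ℝⁿ`). -/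
def simplexDim {n : ℕ} (S : Set (Euc n)) : ℕ :=
  Module.finrank ℝ (vectorSpan ℝ S)

/- The mesh size `h_F` of a simplex `F` of the triangulation `𝒯`: its diameter if
`dim F ≥ 1`, and for a vertex the average diameter of the `n`-simplices containing
it. -/
open Classical in
def meshSize {n : ℕ} (𝒯 : Finset (Set (Euc n))) (F : Set (Euc n)) : ℝ :=
  if simplexDim F = 0 then
    (∑ T ∈ 𝒯.filter (fun T => simplexDim T = n ∧ F ⊆ T), Metric.diam T) /
      ((𝒯.filter (fun T => simplexDim T = n ∧ F ⊆ T)).card : ℝ)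
  else Metric.diam F

/-- `C` is an (upper bound for the) shape constant of the triangulation `𝒯`:
`h_T ^ n ≤ C · |T|` for `n`-simplices, and `h_T ≤ C · h_S` for intersecting
simplices. -/
def ShapeRegular {n : ℕ} (𝒯 : Finset (Set (Euc n))) (C : ℝ) : Prop :=
  (∀ T ∈ 𝒯, simplexDim T = n → meshSize 𝒯 T ^ n ≤ C * (volume T).toReal) ∧
  (∀ T ∈ 𝒯, ∀ S ∈ 𝒯, (S ∩ T).Nonempty → meshSize 𝒯 T ≤ C * meshSize 𝒯 S)

theorem vectorSpan_convexHull {𝕜 E : Type*} [Ring 𝕜] [PartialOrder 𝕜] [AddCommGroup E]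
    [Module 𝕜 E] (s : Set E) : vectorSpan 𝕜 (convexHull 𝕜 s) = vectorSpan 𝕜 s := by
  rw [← direction_affineSpan, affineSpan_convexHull, direction_affineSpan]

section ConvexGeometry

variable {𝕜 E ι : Type*} [Field 𝕜] [LinearOrder 𝕜] [IsStrictOrderedRing 𝕜]
  [AddCommGroup E] [Module 𝕜 E] [Fintype ι]

theorem exists_weights_of_mem_convexHull_range {v : ι → E} {x : E}
    (hx : x ∈ convexHull 𝕜 (range v)) :
    ∃ w : ι → 𝕜, (∀ i, 0 ≤ w i) ∧ ∑ i, w i = 1 ∧ ∑ i, w i • v i = x := by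
  classical
  rw [convexHull_range_eq_exists_affineCombination] at hx
  obtain ⟨t, w, hw₀, hw₁, rfl⟩ := hx
  have hw₁' : ∑ i, (t : Set ι).indicator w i = 1 := by
    rwa [Finset.sum_indicator_subset _ t.subset_univ]
  refine ⟨(t : Set ι).indicator w, fun i => ?_, hw₁', ?_⟩
  · by_cases hi : i ∈ t <;> simp [hi, hw₀]
  · rw [Finset.affineCombination_indicator_subset w v t.subset_univ,
      Finset.affineCombination_eq_linear_combination _ _ _ hw₁']

theorem AffineIndependent.isExtreme_convexHull_image {v : ι → E} (hv : AffineIndependent 𝕜 v)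
    (s : Set ι) : IsExtreme 𝕜 (convexHull 𝕜 (range v)) (convexHull 𝕜 (v '' s)) := by
  refine ⟨convexHull_mono (image_subset_range v s), ?_⟩
  rintro _ hx₁ _ hx₂ x hx ⟨a, b, ha, hb, hab, rfl⟩
  obtain ⟨w₁, hw₁₀, hw₁₁, rfl⟩ := exists_weights_of_mem_convexHull_range hx₁
  obtain ⟨w₂, hw₂₀, hw₂₁, rfl⟩ := exists_weights_of_mem_convexHull_range hx₂
  set w : ι → 𝕜 := fun i => a * w₁ i + b * w₂ i
  have hw : ∑ i, w i = 1 := by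
    simp only [w, Finset.sum_add_distrib, ← Finset.mul_sum, hw₁₁, hw₂₁, mul_one, hab]
  have hcomb : Finset.univ.affineCombination 𝕜 v w =
      a • ∑ i, w₁ i • v i + b • ∑ i, w₂ i • v i := by
    simp only [Finset.affineCombination_eq_linear_combination _ _ _ hw, w, add_smul, mul_smul,
      Finset.sum_add_distrib, Finset.smul_sum]
  -- the weights of `x` vanish off `s`, hence so do those of `x₁`
  have hoff : ∀ i ∉ s, w₁ i = 0 := fun i hi => by
    have hwi : w i = 0 := hv.eq_zero_of_affineCombination_mem_affineSpan hw
      (hcomb ▸ convexHull_subset_affineSpan _ hx) (Finset.mem_univ i) hi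
    have := (add_eq_zero_iff_of_nonneg (mul_nonneg ha.le (hw₁₀ i))
      (mul_nonneg hb.le (hw₂₀ i))).1 hwi
    exact (mul_eq_zero.1 this.1).resolve_left ha.ne'
  rw [← finsum_eq_sum_of_fintype]
  exact (convex_convexHull 𝕜 _).finsum_mem hw₁₀ (by rwa [finsum_eq_sum_of_fintype]) fun i hi =>
    subset_convexHull 𝕜 _ (mem_image_of_mem v (not_imp_comm.1 (hoff i) hi))

theorem AffineIndependent.extremePoints_convexHull_range {v : ι → E}
    (hv : AffineIndependent 𝕜 v) : (convexHull 𝕜 (range v)).extremePoints 𝕜 = range v := by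
  refine extremePoints_convexHull_subset.antisymm ?_
  rintro _ ⟨i, rfl⟩
  have := hv.isExtreme_convexHull_image {i}
  rwa [image_singleton, convexHull_singleton, isExtreme_singleton] at this

theorem univ_centroid_mem_convexHull_range [Nonempty ι] (v : ι → E) :
    Finset.univ.centroid 𝕜 v ∈ convexHull 𝕜 (range v) := by
  rw [Finset.centroid_def]
  exact affineCombination_mem_convexHull (fun i _ => by simp [Finset.centroidWeights_apply])
    (Finset.sum_centroidWeights_eq_one_of_nonempty 𝕜 _ Finset.univ_nonempty)

end ConvexGeometry

theorem MeasureTheory.Measure.addHaar_eq_zero_of_finrank_vectorSpan_lt {E : Type*}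
    [NormedAddCommGroup E] [NormedSpace ℝ E] [MeasurableSpace E] [BorelSpace E]
    [FiniteDimensional ℝ E] (μ : Measure E) [μ.IsAddHaarMeasure] {s : Set E}
    (hs : Module.finrank ℝ (vectorSpan ℝ s) < Module.finrank ℝ E) : μ s = 0 := by
  refine measure_mono_null (subset_affineSpan ℝ s) (addHaar_affineSubspace μ _ fun htop => ?_)
  rw [← direction_affineSpan, htop, AffineSubspace.direction_top, finrank_top] at hs
  exact hs.false

theorem closure_subset_of_subset_union_null {X : Type*} [TopologicalSpace X] [MeasurableSpace X]
    (μ : Measure X) [μ.IsOpenPosMeasure] {U K N : Set X} (hU : IsOpen U) (hK : IsClosed K)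
    (hN : μ N = 0) (hUKN : U ⊆ K ∪ N) : closure U ⊆ K := by
  have hnull : μ (U \ K) = 0 := measure_mono_null (fun x hx => (hUKN hx.1).resolve_left hx.2) hN
  exact closure_minimal (sdiff_eq_empty.1 ((hU.sdiff hK).measure_eq_zero_iff μ |>.1 hnull)) hK

theorem MeasureTheory.card_mul_le_measure_toReal {α ι : Type*} [MeasurableSpace α]
    {μ : Measure α} {s : Finset ι} {f : ι → Set α} {U : Set α} (hU : μ U ≠ ∞)
    (hd : (s : Set ι).Pairwise (Function.onFun (AEDisjoint μ) f))
    (hmeas : ∀ i ∈ s, NullMeasurableSet (f i) μ)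
    (hsub : ∀ i ∈ s, f i ⊆ U) {m : ℝ} (hm : ∀ i ∈ s, m ≤ (μ (f i)).toReal) :
    s.card * m ≤ (μ U).toReal := by
  have hfin : ∀ i ∈ s, μ (f i) ≠ ∞ := fun i hi => ne_top_of_le_ne_top hU (measure_mono (hsub i hi))
  calc s.card * m = ∑ _ ∈ s, m := by rw [Finset.sum_const, nsmul_eq_mul]
    _ ≤ ∑ i ∈ s, (μ (f i)).toReal := Finset.sum_le_sum hm
    _ = (μ (⋃ i ∈ s, f i)).toReal := by
        rw [measure_biUnion_finset₀ hd hmeas, ENNReal.toReal_sum hfin]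
    _ ≤ (μ U).toReal := ENNReal.toReal_mono hU (measure_mono (iUnion₂_subset hsub))

section Simplices

variable {n : ℕ}

theorem IsSimplex.isCompact {S : Set (Euc n)} (hS : IsSimplex S) : IsCompact S := by
  obtain ⟨k, v, -, rfl⟩ := hS
  exact (finite_range v).isCompact_convexHull ℝ

theorem IsSimplex.nonempty {S : Set (Euc n)} (hS : IsSimplex S) : S.Nonempty := by
  obtain ⟨k, v, -, rfl⟩ := hS
  exact (range_nonempty v).convexHull

theorem simplexDim_convexHull_range {k : ℕ} {v : Fin (k + 1) → Euc n}
    (hv : AffineIndependent ℝ v) : simplexDim (convexHull ℝ (range v)) = k := by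
  rw [simplexDim, vectorSpan_convexHull, hv.finrank_vectorSpan (Fintype.card_fin _)]

theorem subsingleton_of_simplexDim_eq_zero {S : Set (Euc n)} (h : simplexDim S = 0) :
    S.Subsingleton :=
  (vectorSpan_eq_bot_iff_subsingleton ℝ).1 (Submodule.finrank_eq_zero.1 h)

theorem simplexDim_le (S : Set (Euc n)) : simplexDim S ≤ n :=
  (Submodule.finrank_le _).trans_eq finrank_euclideanSpace_fin

theorem volume_eq_zero_of_simplexDim_lt {S : Set (Euc n)} (h : simplexDim S < n) :
    volume S = 0 :=
  Measure.addHaar_eq_zero_of_finrank_vectorSpan_lt volume (by rwa [finrank_euclideanSpace_fin])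

theorem diam_le_meshSize (𝒯 : Finset (Set (Euc n))) (F : Set (Euc n)) :
    diam F ≤ meshSize 𝒯 F := by
  unfold meshSize
  split_ifs with h
  · rw [diam_subsingleton (subsingleton_of_simplexDim_eq_zero h)]
    exact div_nonneg (Finset.sum_nonneg fun _ _ => diam_nonneg) (Nat.cast_nonneg _)
  · rfl

theorem IsFaceOf.exists_eq_convexHull_image {F S : Set (Euc n)} (hF : IsFaceOf F S)
    {ι : Type*} [Fintype ι] {v : ι → Euc n} (hv : AffineIndependent ℝ v)
    (hS : S = convexHull ℝ (range v)) : ∃ s : Set ι, F = convexHull ℝ (v '' s) := by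
  obtain ⟨k, v', hv', hS', s', -, rfl⟩ := hF
  -- both tuples enumerate the extreme points of `S`
  have hrange : range v' = range v := by
    rw [← hv'.extremePoints_convexHull_range, ← hS', hS, hv.extremePoints_convexHull_range]
  exact ⟨v ⁻¹' (v' '' s'), by rw [image_preimage_eq_of_subset (hrange ▸ image_subset_range _ _)]⟩

theorem IsFaceOf.eq_of_centroid_mem {F S : Set (Euc n)} (hF : IsFaceOf F S) {k : ℕ}
    {v : Fin (k + 1) → Euc n} (hv : AffineIndependent ℝ v) (hS : S = convexHull ℝ (range v))
    (hc : Finset.univ.centroid ℝ v ∈ F) : F = S := by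
  obtain ⟨s, rfl⟩ := hF.exists_eq_convexHull_image hv hS
  have hw : ∑ i, (Finset.univ : Finset (Fin (k + 1))).centroidWeights ℝ i = 1 :=
    Finset.sum_centroidWeights_eq_one_of_nonempty ℝ _ Finset.univ_nonempty
  have hs : s = univ := eq_univ_of_forall fun i => by
    by_contra hi
    have := hv.eq_zero_of_affineCombination_mem_affineSpan hw
      (convexHull_subset_affineSpan _ hc) (Finset.mem_univ i) hi
    simp [Nat.cast_add_one_ne_zero] at this
  rw [hS, hs, image_univ]

theorem IsFaceOf.volume_eq_zero {F S : Set (Euc n)} (hF : IsFaceOf F S)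
    (hS : simplexDim S = n) (hne : F ≠ S) : volume F = 0 := by
  classical
  obtain ⟨k, v, hv, rfl, s, hs, rfl⟩ := hF
  rw [simplexDim_convexHull_range hv] at hS
  subst hS
  obtain ⟨j, hj⟩ : ∃ j, j ∉ s := by
    by_contra! h
    exact hne (by rw [eq_univ_of_forall h, image_univ])
  have hcard : Fintype.card s < k + 1 := by
    simpa using Fintype.card_subtype_lt hj
  apply volume_eq_zero_of_simplexDim_lt
  rw [simplexDim, vectorSpan_convexHull, image_eq_range]
  have hpos : 0 < Fintype.card s := Fintype.card_pos_iff.2 hs.to_subtype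
  have := finrank_vectorSpan_range_le ℝ (fun i : s => v i) (n := Fintype.card s - 1) (by omega)
  omega

end Simplices

namespace IsTriangulation

open Classical

variable {n : ℕ} {𝒯 : Finset (Set (Euc n))} {X : Set (Euc n)} {C : ℝ} {T : Set (Euc n)}

theorem isFaceOf_of_subset (h : IsTriangulation 𝒯 X) {S P : Set (Euc n)} (hS : S ∈ 𝒯)
    (hP : P ∈ 𝒯) (hSP : S ⊆ P) : IsFaceOf S P := by
  have hSP' : S ∩ P = S := inter_eq_left.2 hSP
  rcases h.2.2.2 S hS P hP with h0 | ⟨-, hface⟩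
  · exact absurd (hSP' ▸ h0) (h.1 S hS).nonempty.ne_empty
  · rwa [hSP'] at hface

theorem card_filter_subset_le (h : IsTriangulation 𝒯 X) {P : Set (Euc n)} (hP : P ∈ 𝒯) :
    (𝒯.filter (· ⊆ P)).card ≤ 2 ^ (n + 1) := by
  obtain ⟨k, v, hv, hPv⟩ := h.1 P hP
  have hk : k ≤ n := simplexDim_convexHull_range hv ▸ hPv ▸ simplexDim_le P
  calc (𝒯.filter (· ⊆ P)).card
      ≤ (Finset.univ.image fun s : Set (Fin (k + 1)) => convexHull ℝ (v '' s)).card := by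
        refine Finset.card_le_card fun S hS => ?_
        rw [Finset.mem_filter] at hS
        obtain ⟨s, rfl⟩ := (h.isFaceOf_of_subset hS.1 hP hS.2).exists_eq_convexHull_image hv hPv
        exact Finset.mem_image_of_mem _ (Finset.mem_univ s)
    _ ≤ 2 ^ (k + 1) := Finset.card_image_le.trans (by simp [Fintype.card_set])
    _ ≤ 2 ^ (n + 1) :=
        Nat.pow_le_pow_right two_pos (Nat.succ_le_succ hk)

theorem volume_inter_eq_zero (h : IsTriangulation 𝒯 X) {P Q : Set (Euc n)} (hP : P ∈ 𝒯)
    (hQ : Q ∈ 𝒯) (hPn : simplexDim P = n) (hQn : simplexDim Q = n) (hne : P ≠ Q) :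
    volume (P ∩ Q) = 0 := by
  rcases h.2.2.2 P hP Q hQ with h0 | ⟨hfP, hfQ⟩
  · simp [h0]
  by_cases hPQ : P ∩ Q = P
  · exact hfQ.volume_eq_zero hQn fun hQ' => hne (hPQ.symm.trans hQ')
  · exact hfP.volume_eq_zero hPn hPQ

theorem closure_subset_biUnion_simplexDim_eq {Ω : Set (Euc n)}
    (h : IsTriangulation 𝒯 (closure Ω)) (hΩ : IsOpen Ω) :
    closure Ω ⊆ ⋃ P ∈ 𝒯.filter (simplexDim · = n), P := by
  refine closure_subset_of_subset_union_null volume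
    (N := ⋃ S ∈ 𝒯.filter (simplexDim · ≠ n), S) hΩ
    ((Finset.finite_toSet _).isClosed_biUnion fun P hP =>
      (h.1 P (Finset.mem_filter.1 hP).1).isCompact.isClosed)
    ((measure_biUnion_null_iff (Finset.countable_toSet _)).2 fun S hS =>
      volume_eq_zero_of_simplexDim_lt ((simplexDim_le S).lt_of_ne (Finset.mem_filter.1 hS).2))
    fun x hx => ?_
  obtain ⟨S, hS, hxS⟩ := mem_iUnion₂.1 (h.2.1.symm ▸ subset_closure hx : x ∈ ⋃ S ∈ 𝒯, S)
  by_cases hSn : simplexDim S = n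
  · exact Or.inl (mem_biUnion (Finset.mem_filter.2 ⟨hS, hSn⟩) hxS)
  · exact Or.inr (mem_biUnion (Finset.mem_filter.2 ⟨hS, hSn⟩) hxS)

theorem exists_superset_simplexDim_eq {Ω : Set (Euc n)} (h : IsTriangulation 𝒯 (closure Ω))
    (hΩ : IsOpen Ω) {S : Set (Euc n)} (hS : S ∈ 𝒯) : ∃ P ∈ 𝒯, simplexDim P = n ∧ S ⊆ P := by
  obtain ⟨k, v, hv, hSv⟩ := h.1 S hS
  have hc : Finset.univ.centroid ℝ v ∈ S := hSv ▸ univ_centroid_mem_convexHull_range v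
  obtain ⟨P, hP, hcP⟩ := mem_iUnion₂.1
    (h.closure_subset_biUnion_simplexDim_eq hΩ (h.2.1 ▸ mem_biUnion hS hc))
  obtain ⟨hP, hPn⟩ := Finset.mem_filter.1 hP
  rcases h.2.2.2 S hS P hP with h0 | ⟨hface, -⟩
  · exact absurd h0 (nonempty_iff_ne_empty.1 ⟨_, hc, hcP⟩)
  · exact ⟨P, hP, hPn, inter_eq_left.1 (hface.eq_of_centroid_mem hv hSv ⟨hc, hcP⟩)⟩

theorem card_neighbors_le {Ω : Set (Euc n)} (h : IsTriangulation 𝒯 (closure Ω)) (hΩ : IsOpen Ω)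
    (T : Set (Euc n)) :
    (𝒯.filter fun S => (S ∩ T).Nonempty).card ≤
      (𝒯.filter fun P => simplexDim P = n ∧ (P ∩ T).Nonempty).card * 2 ^ (n + 1) := by
  calc (𝒯.filter fun S => (S ∩ T).Nonempty).card
      ≤ ((𝒯.filter fun P => simplexDim P = n ∧ (P ∩ T).Nonempty).biUnion
          fun P => 𝒯.filter (· ⊆ P)).card := by
        refine Finset.card_le_card fun S hS => ?_
        obtain ⟨hS, hST⟩ := Finset.mem_filter.1 hS
        obtain ⟨P, hP, hPn, hSP⟩ := h.exists_superset_simplexDim_eq hΩ hS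
        exact Finset.mem_biUnion.2 ⟨P, Finset.mem_filter.2 ⟨hP, hPn, hST.mono
          (inter_subset_inter_left _ hSP)⟩, Finset.mem_filter.2 ⟨hS, hSP⟩⟩
    _ ≤ _ := Finset.card_biUnion_le_card_mul _ _ _ fun P hP =>
        h.card_filter_subset_le (Finset.mem_filter.1 hP).1

theorem subset_closedBall (h : IsTriangulation 𝒯 X) (hreg : ShapeRegular 𝒯 C)
    {S : Set (Euc n)} (hS : S ∈ 𝒯) (hT : T ∈ 𝒯) (hST : (S ∩ T).Nonempty) {t₀ : Euc n}
    (ht₀ : t₀ ∈ T) : S ⊆ closedBall t₀ ((C + 1) * meshSize 𝒯 T) := by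
  obtain ⟨z, hzS, hzT⟩ := hST
  intro y hy
  have hSb := (h.1 S hS).isCompact.isBounded
  have hTb := (h.1 T hT).isCompact.isBounded
  calc dist y t₀ ≤ dist y z + dist z t₀ := dist_triangle _ _ _
    _ ≤ diam S + diam T := add_le_add (dist_le_diam_of_mem hSb hy hzS)
        (dist_le_diam_of_mem hTb hzT ht₀)
    _ ≤ C * meshSize 𝒯 T + meshSize 𝒯 T := add_le_add
        ((diam_le_meshSize 𝒯 S).trans (hreg.2 S hS T hT ⟨z, hzT, hzS⟩)) (diam_le_meshSize 𝒯 T)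
    _ = (C + 1) * meshSize 𝒯 T := by ring

theorem card_neighbors_le_one (h : IsTriangulation 𝒯 X) (hreg : ShapeRegular 𝒯 C)
    (hT : T ∈ 𝒯) (h0 : meshSize 𝒯 T = 0) : (𝒯.filter fun S => (S ∩ T).Nonempty).card ≤ 1 := by
  obtain ⟨t₀, ht₀⟩ := (h.1 T hT).nonempty
  refine Finset.card_le_one_iff_subset_singleton.2 ⟨{t₀}, fun S hS => ?_⟩
  obtain ⟨hS, hST⟩ := Finset.mem_filter.1 hS
  have hSt₀ := h.subset_closedBall hreg hS hT hST ht₀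
  rw [h0, mul_zero, closedBall_zero] at hSt₀
  exact Finset.mem_singleton.2 ((h.1 S hS).nonempty.subset_singleton_iff.1 hSt₀)

theorem card_neighbors_simplexDim_eq_le (h : IsTriangulation 𝒯 X) (hreg : ShapeRegular 𝒯 C)
    (hC : 0 < C) (hT : T ∈ 𝒯) (hpos : 0 < meshSize 𝒯 T) :
    ((𝒯.filter fun P => simplexDim P = n ∧ (P ∩ T).Nonempty).card : ℝ) ≤
      C ^ (n + 1) * (C + 1) ^ n * (volume (ball (0 : Euc n) 1)).toReal := by
  set K := 𝒯.filter fun P => simplexDim P = n ∧ (P ∩ T).Nonempty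
  set h_T := meshSize 𝒯 T
  obtain ⟨t₀, ht₀⟩ := (h.1 T hT).nonempty
  have hvol : ∀ P ∈ K, h_T ^ n / C ^ (n + 1) ≤ (volume P).toReal := fun P hP => by
    obtain ⟨hP, hPn, hPT⟩ := Finset.mem_filter.1 hP
    rw [div_le_iff₀ (by positivity)]
    calc h_T ^ n ≤ (C * meshSize 𝒯 P) ^ n := pow_le_pow_left₀ hpos.le (hreg.2 T hT P hP hPT) n
      _ = C ^ n * meshSize 𝒯 P ^ n := mul_pow _ _ _
      _ ≤ C ^ n * (C * (volume P).toReal) := by gcongr; exact hreg.1 P hP hPn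
      _ = (volume P).toReal * C ^ (n + 1) := by ring
  have hpack := card_mul_le_measure_toReal (f := id)
    (U := closedBall t₀ ((C + 1) * h_T)) measure_closedBall_lt_top.ne
    (fun P hP Q hQ hne => by
      obtain ⟨hP, hPn, -⟩ := Finset.mem_filter.1 hP
      obtain ⟨hQ, hQn, -⟩ := Finset.mem_filter.1 hQ
      exact h.volume_inter_eq_zero hP hQ hPn hQn hne)
    (fun P hP => (h.1 P (Finset.mem_filter.1 hP).1).isCompact.isClosed.measurableSet
      |>.nullMeasurableSet)
    (fun P hP => h.subset_closedBall hreg (Finset.mem_filter.1 hP).1 hT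
      (Finset.mem_filter.1 hP).2.2 ht₀) hvol
  rw [Measure.addHaar_closedBall volume t₀ (by positivity), finrank_euclideanSpace_fin,
    ENNReal.toReal_mul, ENNReal.toReal_ofReal (by positivity), mul_pow] at hpack
  calc (K.card : ℝ) = K.card * (h_T ^ n / C ^ (n + 1)) * C ^ (n + 1) / h_T ^ n := by
        field_simp
    _ ≤ (C + 1) ^ n * h_T ^ n * (volume (ball (0 : Euc n) 1)).toReal * C ^ (n + 1) /
          h_T ^ n := by gcongr
    _ = _ := by field_simp

end IsTriangulation

open Classical in
/-- For every dimension `n` and every `C > 0` there is a bound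
`C_N`, depending only on `n` and `C`, on the number of neighbors of a simplex in
any finite triangulation (of the closure of a bounded open set in `ℝⁿ`) with
shape constant at most `C`. -/
theorem neighbor_count_bound (n : ℕ) (C : ℝ) (hC : 0 < C) :
    ∃ CN : ℝ, 0 < CN ∧
      ∀ Ω : Set (Euc n), IsOpen Ω → Bornology.IsBounded Ω →
      ∀ 𝒯 : Finset (Set (Euc n)), IsTriangulation 𝒯 (closure Ω) →
        ShapeRegular 𝒯 C →
        ∀ T ∈ 𝒯, ((𝒯.filter (fun S => (S ∩ T).Nonempty)).card : ℝ) ≤ CN := by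
  refine ⟨max 1 (C ^ (n + 1) * (C + 1) ^ n * (volume (ball (0 : Euc n) 1)).toReal * 2 ^ (n + 1)),
    lt_max_of_lt_left one_pos, ?_⟩
  intro Ω hΩ _ 𝒯 h𝒯 hreg T hT
  rcases (diam_nonneg.trans (diam_le_meshSize 𝒯 T)).eq_or_lt with h0 | hpos
  · exact le_max_of_le_left (by exact_mod_cast h𝒯.card_neighbors_le_one hreg hT h0.symm)
  · refine le_max_of_le_right ?_
    calc ((𝒯.filter fun S => (S ∩ T).Nonempty).card : ℝ)
        ≤ (𝒯.filter fun P => simplexDim P = n ∧ (P ∩ T).Nonempty).card * 2 ^ (n + 1) := by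
          exact_mod_cast h𝒯.card_neighbors_le hΩ T
      _ ≤ _ := by gcongr; exact h𝒯.card_neighbors_simplexDim_eq_le hreg hC hT hpos
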